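/- arXiv:2103.00249 — 3 statements merged into one kernel-verified Lean document; each statement's English description precedes it below -/
import Mathlib

section
/- Let ω be a graded skew-symmetric nondegenerate matrix over a ℤ₂ⁿ-graded commutative ring, with homogeneous entries ω_{IJ} of degree deg(I)+deg(J)+γ satisfying ω_{JI} = −(-1)^⟨deg I, deg J⟩ ω_{IJ}, and let ω^{IK} be its inverse (ω^{IK}ω_{KJ} = δ^I_J = ω_{JK}ω^{KI}). Then the matrix P^{IK} := (-1)^⟨deg I, deg I⟩ ω^{IK} satisfies P^{IK} = −(-1)^⟨deg I, deg K⟩ + ⟨γ, γ⟩ P^{KI}. -/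
/-- The standard scalar product on `ℤ₂ⁿ = (ZMod 2)ⁿ`. -/
def sp {n : ℕ} (a b : Fin n → ZMod 2) : ZMod 2 := ∑ i, a i * b i

lemma zmod2_cases (x : ZMod 2) : x = 0 ∨ x = 1 := by revert x; decide

lemma f_mul {R : Type*} [Ring R] (x y : ZMod 2) :
    (-1:R)^x.val * (-1:R)^y.val = (-1:R)^(x+y).val := by
  rcases zmod2_cases x with hx|hx <;> rcases zmod2_cases y with hy|hy <;>
    subst hx <;> subst hy <;>
    simp only [show ((0:ZMod 2)+0)=0 from rfl, show ((0:ZMod 2)+1)=1 from rfl,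
      show ((1:ZMod 2)+0)=1 from rfl, show ((1:ZMod 2)+1)=0 from rfl,
      show ((0:ZMod 2)).val = 0 from rfl, show ((1:ZMod 2)).val = 1 from rfl] <;>
    norm_num

lemma sp_add_left {n : ℕ} (a b c : Fin n → ZMod 2) : sp (a+b) c = sp a c + sp b c := by
  simp [sp, add_mul, Finset.sum_add_distrib]

lemma sp_add_right {n : ℕ} (a b c : Fin n → ZMod 2) : sp a (b+c) = sp a b + sp a c := by
  simp [sp, mul_add, Finset.sum_add_distrib]

lemma sign_shuffle1 {R : Type*} [Ring R] (k l : ℕ) (x y : R) :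
    (-(-1:R)^k * x) * (-(-1:R)^l * y) = ((-1:R)^k * (-1:R)^l) * (x * y) := by
  have h : (-1:R)^l * x = x * (-1:R)^l := ((Commute.neg_one_left x).pow_left l).eq
  rw [neg_mul ((-1:R)^l) y, neg_mul ((-1:R)^k) x, neg_mul_neg, mul_assoc, ← mul_assoc x,
    ← h, mul_assoc, ← mul_assoc]

lemma sp_comm {n : ℕ} (a b : Fin n → ZMod 2) : sp a b = sp b a := by
  simp [sp, mul_comm]

/-- The candidate "graded transpose" of `ωinv`. -/
def Bm {n : ℕ} {ι R : Type*} [Ring R] (deg : ι → Fin n → ZMod 2) (γ : Fin n → ZMod 2)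
    (ωinv : ι → ι → R) (A C : ι) : R :=
  -((-1:R)^((sp (deg A) (deg A) + sp (deg C) (deg C) + sp (deg A) (deg C) + sp γ γ)).val)
    * ωinv C A

/-- Symmetry of the inverse of a graded skew-symmetric nondegenerate matrix
`ω` of degree `γ` over a `ℤ₂ⁿ`-graded commutative ring: the matrix
`P^{IK} := (-1)^⟨deg I, deg I⟩ ω^{IK}` satisfies
`P^{IK} = −(-1)^{⟨deg I, deg K⟩ + ⟨γ,γ⟩} P^{KI}`. -/
theorem inverse_symplectic_symmetry (n : ℕ) (ι : Type*) [Fintype ι] [DecidableEq ι]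
    (deg : ι → (Fin n → ZMod 2)) (γ : Fin n → ZMod 2)
    (R : Type*) [Ring R] [Algebra ℝ R]
    (𝒜 : (Fin n → ZMod 2) → Submodule ℝ R)
    (hgc : ∀ (da db : Fin n → ZMod 2) (a b : R), a ∈ 𝒜 da → b ∈ 𝒜 db →
      a * b = (-1 : R) ^ (sp da db).val * (b * a))
    (ω ωinv : ι → ι → R)
    (hωdeg : ∀ I J, ω I J ∈ 𝒜 (deg I + deg J + γ))
    (hinvdeg : ∀ I J, ωinv I J ∈ 𝒜 (deg I + deg J + γ))
    (hskew : ∀ I J, ω J I = -((-1 : R) ^ (sp (deg I) (deg J)).val) * ω I J)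
    (hinv₁ : ∀ I J, ∑ K, ωinv I K * ω K J = if I = J then 1 else 0)
    (hinv₂ : ∀ I J, ∑ K, ω J K * ωinv K I = if J = I then 1 else 0) :
    ∀ I K, (-1 : R) ^ (sp (deg I) (deg I)).val * ωinv I K =
      -((-1 : R) ^ (sp (deg I) (deg K) + sp γ γ).val) *
        ((-1 : R) ^ (sp (deg K) (deg K)).val * ωinv K I) := by
  -- exponent identity used in the key computation
  have expid : ∀ J K' I' : ι,
      sp (deg K') (deg J)
        + (sp (deg K') (deg K') + sp (deg I') (deg I') + sp (deg K') (deg I') + sp γ γ)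
        + sp (deg K' + deg J + γ) (deg I' + deg K' + γ)
      = sp (deg I') (deg I') + sp (deg J) (deg I') + sp (deg J) γ + sp γ (deg I') := by
    intro J K' I'
    simp only [sp_add_left, sp_add_right]
    simp only [sp, ← Finset.sum_add_distrib]
    refine Finset.sum_congr rfl fun i _ => ?_
    generalize deg J i = a
    generalize deg K' i = b
    generalize deg I' i = c
    generalize γ i = d
    revert a b c d
    decide
  -- B is a right inverse of ω
  have key : ∀ J I', (∑ K', ω J K' * Bm deg γ ωinv K' I') = if J = I' then 1 else 0 := by
    intro J I'
    have hterm : ∀ K', ω J K' * Bm deg γ ωinv K' I' =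
        (-1:R)^((sp (deg I') (deg I') + sp (deg J) (deg I') + sp (deg J) γ
          + sp γ (deg I')).val) * (ωinv I' K' * ω K' J) := by
      intro K'
      calc ω J K' * Bm deg γ ωinv K' I'
          = ((-1:R)^(sp (deg K') (deg J)).val
              * (-1:R)^((sp (deg K') (deg K') + sp (deg I') (deg I') + sp (deg K') (deg I')
                + sp γ γ)).val) * (ω K' J * ωinv I' K') := by
            rw [hskew K' J]; simp only [Bm]; exact sign_shuffle1 _ _ _ _
        _ = ((-1:R)^(sp (deg K') (deg J)).val
              * (-1:R)^((sp (deg K') (deg K') + sp (deg I') (deg I') + sp (deg K') (deg I')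
                + sp γ γ)).val)
            * ((-1:R)^(sp (deg K' + deg J + γ) (deg I' + deg K' + γ)).val
              * (ωinv I' K' * ω K' J)) := by
            rw [hgc _ _ (ω K' J) (ωinv I' K') (hωdeg K' J) (hinvdeg I' K')]
        _ = (-1:R)^((sp (deg K') (deg J)
              + (sp (deg K') (deg K') + sp (deg I') (deg I') + sp (deg K') (deg I') + sp γ γ)
              + sp (deg K' + deg J + γ) (deg I' + deg K' + γ)).val)
            * (ωinv I' K' * ω K' J) := by
            rw [f_mul, ← mul_assoc, f_mul]
        _ = (-1:R)^((sp (deg I') (deg I') + sp (deg J) (deg I') + sp (deg J) γ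
              + sp γ (deg I')).val) * (ωinv I' K' * ω K' J) := by
            rw [expid J K' I']
    calc (∑ K', ω J K' * Bm deg γ ωinv K' I')
        = ∑ K', (-1:R)^((sp (deg I') (deg I') + sp (deg J) (deg I') + sp (deg J) γ
            + sp γ (deg I')).val) * (ωinv I' K' * ω K' J) :=
          Finset.sum_congr rfl fun K' _ => hterm K'
      _ = (-1:R)^((sp (deg I') (deg I') + sp (deg J) (deg I') + sp (deg J) γ
            + sp γ (deg I')).val) * ∑ K', ωinv I' K' * ω K' J := by rw [Finset.mul_sum]
      _ = (-1:R)^((sp (deg I') (deg I') + sp (deg J) (deg I') + sp (deg J) γ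
            + sp γ (deg I')).val) * (if I' = J then 1 else 0) := by rw [hinv₁]
      _ = if J = I' then 1 else 0 := by
          rcases eq_or_ne J I' with h|h
          · subst h
            simp only [if_pos rfl, mul_one]
            rw [sp_comm γ (deg J)]
            generalize sp (deg J) (deg J) = a
            generalize sp (deg J) γ = b
            have h0 : a + a + b + b = 0 := by revert a b; decide
            rw [h0]
            norm_num
          · simp [h, Ne.symm h]
  -- uniqueness of the inverse: ωinv = B
  have huniq : ∀ I' K', ωinv I' K' = Bm deg γ ωinv I' K' := by
    intro I' K'
    calc ωinv I' K' = ∑ J, ωinv I' J * (if J = K' then 1 else 0) := by simp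
      _ = ∑ J, ωinv I' J * (∑ M, ω J M * Bm deg γ ωinv M K') := by
          refine Finset.sum_congr rfl fun J _ => ?_; rw [key J K']
      _ = ∑ J, ∑ M, ωinv I' J * (ω J M * Bm deg γ ωinv M K') := by
          simp [Finset.mul_sum]
      _ = ∑ M, ∑ J, ωinv I' J * (ω J M * Bm deg γ ωinv M K') := Finset.sum_comm
      _ = ∑ M, (∑ J, ωinv I' J * ω J M) * Bm deg γ ωinv M K' := by
          refine Finset.sum_congr rfl fun M _ => ?_
          rw [Finset.sum_mul]
          exact Finset.sum_congr rfl fun J _ => (mul_assoc _ _ _).symm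
      _ = ∑ M, (if I' = M then 1 else 0) * Bm deg γ ωinv M K' := by
          refine Finset.sum_congr rfl fun M _ => ?_; rw [hinv₁]
      _ = Bm deg γ ωinv I' K' := by simp
  intro I K
  have hexp : sp (deg I) (deg I)
      + (sp (deg I) (deg I) + sp (deg K) (deg K) + sp (deg I) (deg K) + sp γ γ)
      = (sp (deg I) (deg K) + sp γ γ) + sp (deg K) (deg K) := by
    generalize sp (deg I) (deg I) = a
    generalize sp (deg K) (deg K) = c
    generalize sp (deg I) (deg K) = b
    generalize sp γ γ = g
    revert a b c g
    decide
  rw [huniq I K]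
  calc (-1:R)^(sp (deg I) (deg I)).val * Bm deg γ ωinv I K
      = -((-1:R)^(sp (deg I) (deg I)).val
          * (-1:R)^((sp (deg I) (deg I) + sp (deg K) (deg K) + sp (deg I) (deg K)
            + sp γ γ)).val) * ωinv K I := by
          simp only [Bm]; rw [neg_mul, mul_neg, ← mul_assoc, ← neg_mul]
    _ = -((-1:R)^((sp (deg I) (deg I)
          + (sp (deg I) (deg I) + sp (deg K) (deg K) + sp (deg I) (deg K) + sp γ γ)).val))
          * ωinv K I := by rw [f_mul]
    _ = -((-1:R)^(((sp (deg I) (deg K) + sp γ γ) + sp (deg K) (deg K)).val)) * ωinv K I := by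
          rw [hexp]
    _ = -((-1 : R) ^ (sp (deg I) (deg K) + sp γ γ).val) *
        ((-1 : R) ^ (sp (deg K) (deg K)).val * ωinv K I) := by
          rw [← f_mul, neg_mul, neg_mul, mul_assoc]
end

section
/- Let Δ be the second-order operator Δ(f) := Σ_I ∂²f/(∂x^I ∂p_I^γ) on the free ℤ₂ⁿ-graded commutative algebra generated by x^I (degree deg I) and p_I^γ (degree deg I + γ), with γ odd (⟨γ,γ⟩ = 1). Then Δ fails the graded Leibniz rule exactly by the canonical Poisson bracket: Δ(fg) = Δ(f)g + (-1)^⟨γ, deg f⟩ f Δ(g) + (-1)^⟨deg f + γ, γ⟩ {f,g}, for homogeneous f, g. -/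
/-- The real sign `(-1)^⟨a,b⟩`. -/
noncomputable def sgn {n : ℕ} (a b : Fin n → ZMod 2) : ℝ := (-1 : ℝ) ^ (sp a b).val

/-- The canonical Poisson bracket of the `γ`-shifted cotangent bundle. -/
noncomputable def canBr {n : ℕ} {ι : Type*} [Fintype ι] {A : Type*} [Ring A] [Algebra ℝ A]
    (deg : ι → Fin n → ZMod 2) (γ df : Fin n → ZMod 2)
    (Dx Dp : ι → A →ₗ[ℝ] A) (f g : A) : A :=
  ∑ I, ((sgn (df + γ) (deg I + γ) * sgn (deg I) (deg I)) • (Dp I f * Dx I g)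
    - sgn df (deg I) • (Dx I f * Dp I g))

/-- The BV-like Laplacian `Δ(f) := Σ_I ∂²f/(∂x^I ∂p_I^γ)`. -/
noncomputable def bvLap {ι : Type*} [Fintype ι] {A : Type*} [Ring A] [Algebra ℝ A]
    (Dx Dp : ι → A →ₗ[ℝ] A) (f : A) : A :=
  ∑ I, Dx I (Dp I f)

lemma pow_neg_one_zmod (x y : ZMod 2) : ((-1:ℝ)^(x+y).val) = (-1)^x.val * (-1)^y.val := by
  rw [ZMod.val_add]
  fin_cases x <;> fin_cases y <;> norm_num [show ((1:ZMod 2)+1) = 0 from rfl, ZMod.val]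

lemma pow_neg_one_succ (x : ZMod 2) : ((-1:ℝ)^(x+1).val) = -((-1)^x.val) := by
  rw [ZMod.val_add, ZMod.val_one]
  fin_cases x <;> norm_num [show ((1:ZMod 2)+1) = 0 from rfl, ZMod.val]

lemma sgn_mul_sgn {n : ℕ} (a b c d : Fin n → ZMod 2) :
    sgn a b * sgn c d = (-1:ℝ)^(sp a b + sp c d).val := by
  rw [sgn, sgn, pow_neg_one_zmod]

/-- For odd `γ` (`⟨γ,γ⟩ = 1`), the BV-like Laplacian fails the graded Leibniz
rule exactly by the canonical Poisson bracket:
`Δ(fg) = Δ(f)g + (-1)^⟨γ,deg f⟩ f Δ(g) + (-1)^⟨deg f + γ, γ⟩ {f,g}`. -/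
theorem bv_laplacian_generates_bracket (n : ℕ) (ι : Type*) [Fintype ι] [DecidableEq ι]
    (deg : ι → Fin n → ZMod 2) (γ : Fin n → ZMod 2) (hγ : sp γ γ = 1)
    (A : Type*) [Ring A] [Algebra ℝ A]
    (𝒜 : (Fin n → ZMod 2) → Submodule ℝ A)
    (hgc : ∀ (da db : Fin n → ZMod 2) (a b : A), a ∈ 𝒜 da → b ∈ 𝒜 db →
      a * b = sgn da db • (b * a))
    (Dx Dp : ι → A →ₗ[ℝ] A)
    (hDxLeib : ∀ (I : ι) (da : Fin n → ZMod 2) (a b : A), a ∈ 𝒜 da →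
      Dx I (a * b) = Dx I a * b + sgn (deg I) da • (a * Dx I b))
    (hDpLeib : ∀ (I : ι) (da : Fin n → ZMod 2) (a b : A), a ∈ 𝒜 da →
      Dp I (a * b) = Dp I a * b + sgn (deg I + γ) da • (a * Dp I b))
    (hDxdeg : ∀ (I : ι) (da : Fin n → ZMod 2) (a : A), a ∈ 𝒜 da →
      Dx I a ∈ 𝒜 (da + deg I))
    (hDpdeg : ∀ (I : ι) (da : Fin n → ZMod 2) (a : A), a ∈ 𝒜 da →
      Dp I a ∈ 𝒜 (da + deg I + γ)) :
    ∀ (df : Fin n → ZMod 2) (f g : A), f ∈ 𝒜 df →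
      bvLap Dx Dp (f * g) =
        bvLap Dx Dp f * g + sgn γ df • (f * bvLap Dx Dp g) +
          sgn (df + γ) γ • canBr deg γ df Dx Dp f g := by
  intro df f g hf
  have key : ∀ I : ι, Dx I (Dp I (f * g)) =
      Dx I (Dp I f) * g + sgn γ df • (f * Dx I (Dp I g)) +
        sgn (df + γ) γ • ((sgn (df + γ) (deg I + γ) * sgn (deg I) (deg I)) • (Dp I f * Dx I g)
          - sgn df (deg I) • (Dx I f * Dp I g)) := by
    intro I
    have h1 : sgn (deg I + γ) df * sgn (deg I) df = sgn γ df := by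
      rw [sgn_mul_sgn, sgn]
      congr 2
      rw [sp_add_left]
      generalize sp (deg I) df = a
      generalize sp γ df = b
      revert a b; decide
    have h2 : sgn (deg I) (df + deg I + γ) =
        sgn (df + γ) γ * (sgn (df + γ) (deg I + γ) * sgn (deg I) (deg I)) := by
      rw [sgn_mul_sgn (df + γ) (deg I + γ) (deg I) (deg I)]
      simp only [sgn]
      rw [← pow_neg_one_zmod]
      congr 2
      rw [sp_add_right, sp_add_right, sp_add_left, sp_add_left, sp_add_right, sp_add_right,
        sp_comm df γ, sp_comm df (deg I), sp_comm (deg I) γ]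
      generalize sp γ df = a
      generalize sp (deg I) df = b
      generalize sp γ (deg I) = c
      generalize sp (deg I) (deg I) = d
      generalize sp γ γ = e
      revert a b c d e; decide
    have h3 : sgn (df + γ) γ * sgn df (deg I) = -(sgn (deg I + γ) df) := by
      rw [sgn_mul_sgn, sgn]
      have he : sp (df + γ) γ + sp df (deg I) = sp (deg I + γ) df + 1 := by
        rw [sp_add_left, sp_add_left, hγ, sp_comm df γ, sp_comm df (deg I)]
        generalize sp γ df = a
        generalize sp (deg I) df = b
        revert a b; decide
      rw [he, pow_neg_one_succ]
    have hfp : Dp I f ∈ 𝒜 (df + deg I + γ) := hDpdeg I df f hf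
    rw [hDpLeib I df f g hf, map_add, map_smul, hDxLeib I (df + deg I + γ) (Dp I f) g hfp,
      hDxLeib I df f (Dp I g) hf]
    rw [smul_sub, smul_smul, smul_smul, h3, ← h2]
    rw [smul_add, smul_smul, h1]
    module
  calc bvLap Dx Dp (f * g) = ∑ I, Dx I (Dp I (f * g)) := rfl
    _ = ∑ I, (Dx I (Dp I f) * g + sgn γ df • (f * Dx I (Dp I g)) +
        sgn (df + γ) γ • ((sgn (df + γ) (deg I + γ) * sgn (deg I) (deg I)) • (Dp I f * Dx I g)
          - sgn df (deg I) • (Dx I f * Dp I g))) := Finset.sum_congr rfl fun I _ => key I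
    _ = bvLap Dx Dp f * g + sgn γ df • (f * bvLap Dx Dp g) +
          sgn (df + γ) γ • canBr deg γ df Dx Dp f g := by
        simp [bvLap, canBr, Finset.sum_add_distrib, Finset.sum_mul, Finset.mul_sum,
          Finset.smul_sum, Finset.sum_sub_distrib, smul_sub]
end

section
/- Let V be a finite-dimensional real vector space graded by the odd part of ℤ₂ⁿ (all degrees γ_p with ⟨γ_p,γ_p⟩ = 1), equipped with a nondegenerate bilinear form (·,·) of even degree γ that is homogeneous ((u,v) = 0 unless deg u + deg v = γ) and satisfies (u,v) = (-1)^⟨deg u, γ⟩ (v,u) for homogeneous u, v with (u,u) ≠ 0 possible only when γ = 0. Then there is a homogeneous basis q¹,…,qʲ, p₁,…,p_j, y₁,…,y_k with deg p_i = deg q^i + γ, such that (q^i, p_l) = δ^i_l, (y_m, y_m) = ε_m = ±1, and all other pairings among basis vectors vanish; moreover k = 0 unless γ = 0. -/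
noncomputable def gdProj {n : ℕ} {V : Type*} [AddCommGroup V] [Module ℝ V]
    (𝒱 : (Fin n → ZMod 2) → Submodule ℝ V) (hInt : DirectSum.IsInternal 𝒱)
    (δ : Fin n → ZMod 2) : V →ₗ[ℝ] V :=
  (𝒱 δ).subtype ∘ₗ (DirectSum.component ℝ _ (fun δ => 𝒱 δ) δ) ∘ₗ
    (LinearEquiv.ofBijective (DirectSum.coeLinearMap 𝒱) hInt).symm.toLinearMap

lemma gdProj_mem {n : ℕ} {V : Type*} [AddCommGroup V] [Module ℝ V]
    (𝒱 : (Fin n → ZMod 2) → Submodule ℝ V) (hInt : DirectSum.IsInternal 𝒱)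
    (δ : Fin n → ZMod 2) (v : V) : gdProj 𝒱 hInt δ v ∈ 𝒱 δ := by
  simp [gdProj]

lemma gdProj_sum {n : ℕ} {V : Type*} [AddCommGroup V] [Module ℝ V]
    (𝒱 : (Fin n → ZMod 2) → Submodule ℝ V) (hInt : DirectSum.IsInternal 𝒱)
    (v : V) : ∑ δ, gdProj 𝒱 hInt δ v = v := by
  set e := LinearEquiv.ofBijective (DirectSum.coeLinearMap 𝒱) hInt with he
  have h1 : DirectSum.coeLinearMap 𝒱 (e.symm v) = v := e.apply_symm_apply v
  have h2 : e.symm v = ∑ δ, DirectSum.of (fun δ => 𝒱 δ) δ (e.symm v δ) :=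
    (DirectSum.sum_univ_of _).symm
  calc ∑ δ, gdProj 𝒱 hInt δ v
      = ∑ δ, DirectSum.coeLinearMap 𝒱 (DirectSum.of (fun δ => 𝒱 δ) δ (e.symm v δ)) := by
        refine Finset.sum_congr rfl fun δ _ => ?_
        simp [gdProj, DirectSum.coeLinearMap_of]
        rfl
    _ = DirectSum.coeLinearMap 𝒱 (e.symm v) := by rw [← map_sum, ← h2]
    _ = v := h1

lemma z2_self {n : ℕ} (x : Fin n → ZMod 2) : x + x = 0 := by
  funext i; exact (by decide : ∀ y : ZMod 2, y + y = 0) _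

theorem gdAux (n : ℕ) (V : Type*) [AddCommGroup V] [Module ℝ V]
    [FiniteDimensional ℝ V]
    (𝒱 : (Fin n → ZMod 2) → Submodule ℝ V)
    (hInt : DirectSum.IsInternal 𝒱)
    (γ : Fin n → ZMod 2)
    (B : V →ₗ[ℝ] V →ₗ[ℝ] ℝ)
    (hhom : ∀ (da db : Fin n → ZMod 2) (a b : V), a ∈ 𝒱 da → b ∈ 𝒱 db →
      da + db ≠ γ → B a b = 0)
    (hsym : ∀ (da db : Fin n → ZMod 2) (a b : V), a ∈ 𝒱 da → b ∈ 𝒱 db →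
      B a b = (-1 : ℝ) ^ (sp da γ).val * B b a)
    (d : ℕ) :
    ∀ W : Submodule ℝ V,
      (∀ w ∈ W, ∀ δ, gdProj 𝒱 hInt δ w ∈ W) →
      (∀ v ∈ W, (∀ w ∈ W, B v w = 0) → v = 0) →
      Module.finrank ℝ W = d →
      ∃ (j k : ℕ) (q p : Fin j → V) (y : Fin k → V)
        (dq : Fin j → (Fin n → ZMod 2)) (dy : Fin k → (Fin n → ZMod 2))
        (ε : Fin k → ℝ),
        (∀ i, q i ∈ 𝒱 (dq i)) ∧
        (∀ i, p i ∈ 𝒱 (dq i + γ)) ∧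
        (∀ m, y m ∈ 𝒱 (dy m)) ∧
        (∀ m, ε m = 1 ∨ ε m = -1) ∧
        Submodule.span ℝ (Set.range q ∪ (Set.range p ∪ Set.range y)) = W ∧
        (∀ i l, B (q i) (p l) = if i = l then 1 else 0) ∧
        (∀ i l, B (q i) (q l) = 0) ∧
        (∀ i l, B (p i) (p l) = 0) ∧
        (∀ i m, B (q i) (y m) = 0) ∧
        (∀ i m, B (p i) (y m) = 0) ∧
        (∀ m m', B (y m) (y m') = if m = m' then ε m else 0) ∧
        (∀ i m, B (y m) (q i) = 0) ∧
        (∀ i m, B (y m) (p i) = 0) ∧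
        (γ ≠ 0 → k = 0) := by
  have hkerproj : ∀ (a : V) (da), a ∈ 𝒱 da → ∀ w, B a w = 0 →
      ∀ δ, B a (gdProj 𝒱 hInt δ w) = 0 := by
    intro a da ha w hw δ
    by_cases hδ : δ = γ + da
    · subst hδ
      have : B a w = B a (gdProj 𝒱 hInt (γ + da) w) := by
        conv_lhs => rw [← gdProj_sum 𝒱 hInt w, map_sum]
        refine Finset.sum_eq_single_of_mem _ (Finset.mem_univ _) fun δ _ hδ => ?_
        refine hhom da δ a _ ha (gdProj_mem 𝒱 hInt δ w) fun hc => hδ ?_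
        rw [← hc, add_comm da δ, add_assoc, z2_self, add_zero]
      rw [← this]; exact hw
    · refine hhom da δ a _ ha (gdProj_mem 𝒱 hInt δ w) fun hc => hδ ?_
      rw [← hc, add_comm da δ, add_assoc, z2_self, add_zero]
  have hflip : ∀ (a : V) (da), a ∈ 𝒱 da → ∀ w, B a w = 0 → B w a = 0 := by
    intro a da ha w hw
    have hR : B w a = B (gdProj 𝒱 hInt (γ + da) w) a := by
      conv_lhs => rw [← gdProj_sum 𝒱 hInt w, map_sum, LinearMap.sum_apply]
      refine Finset.sum_eq_single_of_mem _ (Finset.mem_univ _) fun δ _ hδ => ?_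
      refine hhom δ da _ a (gdProj_mem 𝒱 hInt δ w) ha fun hc => hδ ?_
      rw [← hc, add_assoc, z2_self, add_zero]
    have hL : B a (gdProj 𝒱 hInt (γ + da) w) = 0 := hkerproj a da ha w hw (γ + da)
    rw [hR, hsym (γ + da) da _ a (gdProj_mem 𝒱 hInt _ w) ha, hL, mul_zero]
  induction d using Nat.strong_induction_on with
  | _ d IH =>
    intro W hgr hnd hrk
    by_cases hW : W = ⊥
    · refine ⟨0, 0, Fin.elim0, Fin.elim0, Fin.elim0, Fin.elim0, Fin.elim0, Fin.elim0,
        fun i => i.elim0, fun i => i.elim0, fun m => m.elim0, fun m => m.elim0, ?_,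
        fun i => i.elim0, fun i => i.elim0, fun i => i.elim0, fun i => i.elim0,
        fun i => i.elim0, fun m => m.elim0, fun i => i.elim0, fun i => i.elim0,
        fun _ => rfl⟩
      simp [hW, Set.range_eq_empty]
    · by_cases hex : ∃ (η : Fin n → ZMod 2) (z : V), z ∈ W ∧ z ∈ 𝒱 η ∧ B z z ≠ 0
      · obtain ⟨η, z, hzW, hzη, hzz⟩ := hex
        have hγ0 : γ = 0 := by
          by_contra hγne
          exact hzz (hhom η η z z hzη hzη (by rw [z2_self η]; exact fun h => hγne h.symm))
        set t : ℝ := (Real.sqrt |B z z|)⁻¹ with ht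
        obtain ⟨y₀, hy₀def⟩ : ∃ y₀ : V, y₀ = t • z := ⟨_, rfl⟩
        obtain ⟨ε₀, hε₀def⟩ : ∃ ε₀ : ℝ, ε₀ = if 0 < B z z then (1:ℝ) else -1 := ⟨_, rfl⟩
        have hε₀ : ε₀ = 1 ∨ ε₀ = -1 := by
          rw [hε₀def]; split <;> simp
        have hε₀ne : ε₀ ≠ 0 := by rcases hε₀ with h | h <;> rw [h] <;> norm_num
        have hy₀η : y₀ ∈ 𝒱 η := by rw [hy₀def]; exact Submodule.smul_mem _ _ hzη
        have hy₀W : y₀ ∈ W := by rw [hy₀def]; exact Submodule.smul_mem _ _ hzW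
        have habs : (0:ℝ) < |B z z| := abs_pos.mpr hzz
        have hsq : Real.sqrt |B z z| * Real.sqrt |B z z| = |B z z| :=
          Real.mul_self_sqrt (abs_nonneg _)
        have hy₀y₀ : B y₀ y₀ = ε₀ := by
          rw [hy₀def]
          simp only [map_smul, LinearMap.smul_apply, smul_eq_mul]
          have key : t * (t * B z z) = |B z z|⁻¹ * B z z := by
            rw [← mul_assoc, ht, ← mul_inv, hsq]
          rw [key, hε₀def]
          rcases lt_or_gt_of_ne hzz with hneg | hpos
          · rw [if_neg (not_lt.mpr hneg.le), abs_of_neg hneg]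
            field_simp
          · rw [if_pos hpos, abs_of_pos hpos, inv_mul_cancel₀ hzz]
        obtain ⟨W', hW'def⟩ : ∃ W' : Submodule ℝ V, W' = W ⊓ LinearMap.ker (B y₀) := ⟨_, rfl⟩
        have hmem' : ∀ v, v ∈ W' ↔ v ∈ W ∧ B y₀ v = 0 := by
          intro v; rw [hW'def]; simp [Submodule.mem_inf, LinearMap.mem_ker]
        have hgr' : ∀ w ∈ W', ∀ δ, gdProj 𝒱 hInt δ w ∈ W' := by
          intro w hw δ
          rw [hmem'] at hw ⊢
          exact ⟨hgr w hw.1 δ, hkerproj y₀ η hy₀η w hw.2 δ⟩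
        have hdec : ∀ w ∈ W, w - (ε₀⁻¹ * B y₀ w) • y₀ ∈ W' := by
          intro w hw
          rw [hmem']
          refine ⟨Submodule.sub_mem _ hw (Submodule.smul_mem _ _ hy₀W), ?_⟩
          rw [map_sub, map_smul, smul_eq_mul, hy₀y₀]
          field_simp
          ring
        have hnd' : ∀ v ∈ W', (∀ w ∈ W', B v w = 0) → v = 0 := by
          intro v hv hvW'
          refine hnd v ((hmem' v).mp hv).1 ?_
          intro w hw
          have hw'' := hdec w hw
          have hvy₀ : B v y₀ = 0 := hflip y₀ η hy₀η v ((hmem' v).mp hv).2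
          have heq : w = (w - (ε₀⁻¹ * B y₀ w) • y₀) + (ε₀⁻¹ * B y₀ w) • y₀ := by abel
          rw [heq, map_add, map_smul, smul_eq_mul, hvy₀, mul_zero, add_zero]
          exact hvW' _ hw''
        have hlt : W' < W := by
          refine lt_of_le_of_ne (hW'def ▸ inf_le_left) fun he => hε₀ne ?_
          have hy₀' : y₀ ∈ W' := he.symm ▸ hy₀W
          have h0 := ((hmem' y₀).mp hy₀').2
          rw [hy₀y₀] at h0; exact h0
        have hr : Module.finrank ℝ W' < d := by
          rw [← hrk]; exact Submodule.finrank_lt_finrank_of_lt hlt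
        obtain ⟨j, k, q, p, y, dq, dy, ε, h1, h2, h3, h4, hsp, h6, h7, h8, h9, h10, h11,
          h12, h13, h14⟩ := IH _ hr W' hgr' hnd' rfl
        have hqW' : ∀ i, q i ∈ W' := fun i => by
          rw [← hsp]; exact Submodule.subset_span (Set.mem_union_left _ ⟨i, rfl⟩)
        have hpW' : ∀ i, p i ∈ W' := fun i => by
          rw [← hsp]
          exact Submodule.subset_span (Set.mem_union_right _ (Set.mem_union_left _ ⟨i, rfl⟩))
        have hyW' : ∀ m, y m ∈ W' := fun m => by
          rw [← hsp]
          exact Submodule.subset_span (Set.mem_union_right _ (Set.mem_union_right _ ⟨m, rfl⟩))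
        refine ⟨j, k + 1, q, p, Fin.cons y₀ y, dq, Fin.cons η dy, Fin.cons ε₀ ε,
          h1, h2, ?_, ?_, ?_, h6, h7, h8, ?_, ?_, ?_, ?_, ?_, fun h => absurd hγ0 h⟩
        · intro m
          refine Fin.cases ?_ ?_ m
          · simpa using hy₀η
          · intro mm; simpa using h3 mm
        · intro m
          refine Fin.cases ?_ ?_ m
          · simpa using hε₀
          · intro mm; simpa using h4 mm
        · apply le_antisymm
          · rw [Submodule.span_le]
            rintro v (⟨i, rfl⟩ | (⟨i, rfl⟩ | ⟨m, rfl⟩))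
            · exact ((hmem' _).mp (hqW' i)).1
            · exact ((hmem' _).mp (hpW' i)).1
            · refine Fin.cases ?_ ?_ m
              · simpa using hy₀W
              · intro mm
                simpa using ((hmem' _).mp (hyW' mm)).1
          · intro w hw
            have hw'' := hdec w hw
            have hsub : (Set.range q ∪ (Set.range p ∪ Set.range y)) ⊆
                (Set.range q ∪ (Set.range p ∪ Set.range (Fin.cons y₀ y : Fin (k+1) → V))) := by
              refine Set.union_subset_union_right _ (Set.union_subset_union_right _ ?_)
              rintro v ⟨m, rfl⟩
              exact ⟨m.succ, by simp⟩
            have hmemsp : w - (ε₀⁻¹ * B y₀ w) • y₀ ∈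
                Submodule.span ℝ (Set.range q ∪ (Set.range p ∪
                  Set.range (Fin.cons y₀ y : Fin (k+1) → V))) := by
              refine Submodule.span_mono hsub ?_
              rw [hsp]; exact hw''
            have hy₀sp : y₀ ∈ Submodule.span ℝ
                (Set.range q ∪ (Set.range p ∪ Set.range (Fin.cons y₀ y : Fin (k+1) → V))) :=
              Submodule.subset_span (Set.mem_union_right _ (Set.mem_union_right _ ⟨0, by simp⟩))
            have heq : w = (w - (ε₀⁻¹ * B y₀ w) • y₀) + (ε₀⁻¹ * B y₀ w) • y₀ := by abel
            rw [heq]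
            exact Submodule.add_mem _ hmemsp (Submodule.smul_mem _ _ hy₀sp)
        · intro i m
          refine Fin.cases ?_ ?_ m
          · simpa using hflip y₀ η hy₀η (q i) ((hmem' _).mp (hqW' i)).2
          · intro mm; simpa using h9 i mm
        · intro i m
          refine Fin.cases ?_ ?_ m
          · simpa using hflip y₀ η hy₀η (p i) ((hmem' _).mp (hpW' i)).2
          · intro mm; simpa using h10 i mm
        · intro m m'
          refine Fin.cases ?_ ?_ m
          · refine Fin.cases ?_ ?_ m'
            · simpa using hy₀y₀
            · intro mm
              have h0 := ((hmem' _).mp (hyW' mm)).2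
              simp [Fin.cons_succ, (Fin.succ_ne_zero mm).symm, h0]
          · intro mm
            refine Fin.cases ?_ ?_ m'
            · have h0 := hflip y₀ η hy₀η (y mm) ((hmem' _).mp (hyW' mm)).2
              simp [Fin.cons_succ, Fin.succ_ne_zero mm, h0]
            · intro mm'
              have h0 := h11 mm mm'
              simp [Fin.cons_succ, Fin.succ_inj, h0]
        · intro i m
          refine Fin.cases ?_ ?_ m
          · simpa using ((hmem' _).mp (hqW' i)).2
          · intro mm; simpa using h12 i mm
        · intro i m
          refine Fin.cases ?_ ?_ m
          · simpa using ((hmem' _).mp (hpW' i)).2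
          · intro mm; simpa using h13 i mm
      · push_neg at hex
        obtain ⟨w₁, hw₁W, hw₁ne⟩ := (Submodule.ne_bot_iff W).mp hW
        have hex1 : ∃ w₂ ∈ W, B w₁ w₂ ≠ 0 := by
          by_contra h; push_neg at h
          exact hw₁ne (hnd w₁ hw₁W h)
        obtain ⟨w₂, hw₂W, hBne⟩ := hex1
        have hex2 : ∃ δ δ', B (gdProj 𝒱 hInt δ w₁) (gdProj 𝒱 hInt δ' w₂) ≠ 0 := by
          by_contra h; push_neg at h
          apply hBne
          conv_lhs => rw [← gdProj_sum 𝒱 hInt w₁, ← gdProj_sum 𝒱 hInt w₂]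
          simp only [map_sum, LinearMap.sum_apply]
          exact Finset.sum_eq_zero fun δ' _ => Finset.sum_eq_zero fun δ _ => h δ δ'
        obtain ⟨δ, δ', hc⟩ := hex2
        obtain ⟨u, hudef⟩ : ∃ u : V, u = gdProj 𝒱 hInt δ w₁ := ⟨_, rfl⟩
        obtain ⟨v, hvdef⟩ : ∃ v : V, v = gdProj 𝒱 hInt δ' w₂ := ⟨_, rfl⟩
        rw [← hudef, ← hvdef] at hc
        have huδ : u ∈ 𝒱 δ := by rw [hudef]; exact gdProj_mem 𝒱 hInt δ w₁
        have hvδ' : v ∈ 𝒱 δ' := by rw [hvdef]; exact gdProj_mem 𝒱 hInt δ' w₂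
        have huW : u ∈ W := by rw [hudef]; exact hgr w₁ hw₁W δ
        have hvW : v ∈ W := by rw [hvdef]; exact hgr w₂ hw₂W δ'
        have hγsum : δ + δ' = γ := by
          by_contra h
          exact hc (hhom δ δ' u v huδ hvδ' h)
        have hδ' : δ + γ = δ' := by rw [← hγsum, ← add_assoc, z2_self, zero_add]
        obtain ⟨p₀, hp₀def⟩ : ∃ p₀ : V, p₀ = (B u v)⁻¹ • v := ⟨_, rfl⟩
        have hp₀δ' : p₀ ∈ 𝒱 δ' := by rw [hp₀def]; exact Submodule.smul_mem _ _ hvδ'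
        have hp₀W : p₀ ∈ W := by rw [hp₀def]; exact Submodule.smul_mem _ _ hvW
        have hq₀p₀ : B u p₀ = 1 := by
          rw [hp₀def, map_smul, smul_eq_mul, inv_mul_cancel₀ hc]
        have hq₀q₀ : B u u = 0 := hex δ u huW huδ
        have hvv : B v v = 0 := hex δ' v hvW hvδ'
        have hp₀p₀ : B p₀ p₀ = 0 := by
          rw [hp₀def]
          simp only [map_smul, LinearMap.smul_apply, smul_eq_mul, hvv]
          ring
        obtain ⟨s, hsdef⟩ : ∃ s : ℝ, s = (-1 : ℝ) ^ (sp δ' γ).val := ⟨_, rfl⟩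
        have hp₀q₀ : B p₀ u = s := by
          rw [hsym δ' δ p₀ u hp₀δ' huδ, hq₀p₀, mul_one, hsdef]
        have hs : s = 1 ∨ s = -1 := by
          rw [hsdef]
          rcases Nat.even_or_odd (sp δ' γ).val with he | ho
          · left; exact he.neg_one_pow
          · right; exact ho.neg_one_pow
        have hsne : s ≠ 0 := by rcases hs with h | h <;> rw [h] <;> norm_num
        obtain ⟨W', hW'def⟩ : ∃ W' : Submodule ℝ V,
            W' = W ⊓ LinearMap.ker (B u) ⊓ LinearMap.ker (B p₀) := ⟨_, rfl⟩
        have hmem' : ∀ x, x ∈ W' ↔ x ∈ W ∧ B u x = 0 ∧ B p₀ x = 0 := by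
          intro x; rw [hW'def]
          simp [Submodule.mem_inf, LinearMap.mem_ker, and_assoc]
        have hgr' : ∀ w ∈ W', ∀ δ₀, gdProj 𝒱 hInt δ₀ w ∈ W' := by
          intro w hw δ₀
          rw [hmem'] at hw ⊢
          exact ⟨hgr w hw.1 δ₀, hkerproj u δ huδ w hw.2.1 δ₀, hkerproj p₀ δ' hp₀δ' w hw.2.2 δ₀⟩
        have hdec : ∀ w ∈ W, w - (s⁻¹ * B p₀ w) • u - (B u w) • p₀ ∈ W' := by
          intro w hw
          rw [hmem']
          refine ⟨Submodule.sub_mem _ (Submodule.sub_mem _ hw (Submodule.smul_mem _ _ huW))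
            (Submodule.smul_mem _ _ hp₀W), ?_, ?_⟩
          · simp only [map_sub, map_smul, smul_eq_mul]
            rw [hq₀q₀, hq₀p₀]; ring
          · simp only [map_sub, map_smul, smul_eq_mul]
            rw [hp₀q₀, hp₀p₀]
            field_simp
            ring
        have hnd' : ∀ x ∈ W', (∀ w ∈ W', B x w = 0) → x = 0 := by
          intro x hx hxW'
          refine hnd x ((hmem' x).mp hx).1 ?_
          intro w hw
          have hw'' := hdec w hw
          have hxu : B x u = 0 := hflip u δ huδ x ((hmem' x).mp hx).2.1
          have hxp₀ : B x p₀ = 0 := hflip p₀ δ' hp₀δ' x ((hmem' x).mp hx).2.2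
          have heq : w = (w - (s⁻¹ * B p₀ w) • u - (B u w) • p₀)
              + (s⁻¹ * B p₀ w) • u + (B u w) • p₀ := by abel
          rw [heq]
          simp only [map_add, map_smul, smul_eq_mul]
          rw [hxu, hxp₀, hxW' _ hw'']
          ring
        have hlt : W' < W := by
          refine lt_of_le_of_ne (hW'def ▸ le_trans inf_le_left inf_le_left) fun he => ?_
          have hu' : u ∈ W' := he.symm ▸ huW
          have h0 := ((hmem' u).mp hu').2.2
          rw [hp₀q₀] at h0
          exact hsne h0
        have hr : Module.finrank ℝ W' < d := by
          rw [← hrk]; exact Submodule.finrank_lt_finrank_of_lt hlt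
        obtain ⟨j, k, q, p, y, dq, dy, ε, h1, h2, h3, h4, hsp, h6, h7, h8, h9, h10, h11,
          h12, h13, h14⟩ := IH _ hr W' hgr' hnd' rfl
        have hqW' : ∀ i, q i ∈ W' := fun i => by
          rw [← hsp]; exact Submodule.subset_span (Set.mem_union_left _ ⟨i, rfl⟩)
        have hpW' : ∀ i, p i ∈ W' := fun i => by
          rw [← hsp]
          exact Submodule.subset_span (Set.mem_union_right _ (Set.mem_union_left _ ⟨i, rfl⟩))
        have hyW' : ∀ m, y m ∈ W' := fun m => by
          rw [← hsp]
          exact Submodule.subset_span (Set.mem_union_right _ (Set.mem_union_right _ ⟨m, rfl⟩))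
        refine ⟨j + 1, k, Fin.cons u q, Fin.cons p₀ p, y, Fin.cons δ dq, dy, ε,
          ?_, ?_, h3, h4, ?_, ?_, ?_, ?_, ?_, ?_, h11, ?_, ?_, h14⟩
        · intro i
          refine Fin.cases ?_ ?_ i
          · simpa using huδ
          · intro ii; simpa using h1 ii
        · intro i
          refine Fin.cases ?_ ?_ i
          · simpa [hδ'] using hp₀δ'
          · intro ii; simpa using h2 ii
        · apply le_antisymm
          · rw [Submodule.span_le]
            rintro x (⟨i, rfl⟩ | (⟨i, rfl⟩ | ⟨m, rfl⟩))
            · refine Fin.cases ?_ ?_ i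
              · simpa using huW
              · intro ii; simpa using ((hmem' _).mp (hqW' ii)).1
            · refine Fin.cases ?_ ?_ i
              · simpa using hp₀W
              · intro ii; simpa using ((hmem' _).mp (hpW' ii)).1
            · exact ((hmem' _).mp (hyW' m)).1
          · intro w hw
            have hw'' := hdec w hw
            have hsub : (Set.range q ∪ (Set.range p ∪ Set.range y)) ⊆
                (Set.range (Fin.cons u q : Fin (j+1) → V) ∪
                  (Set.range (Fin.cons p₀ p : Fin (j+1) → V) ∪ Set.range y)) := by
              refine Set.union_subset_union ?_ (Set.union_subset_union ?_ le_rfl)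
              · rintro x ⟨i, rfl⟩; exact ⟨i.succ, by simp⟩
              · rintro x ⟨i, rfl⟩; exact ⟨i.succ, by simp⟩
            have hmemsp : w - (s⁻¹ * B p₀ w) • u - (B u w) • p₀ ∈
                Submodule.span ℝ (Set.range (Fin.cons u q : Fin (j+1) → V) ∪
                  (Set.range (Fin.cons p₀ p : Fin (j+1) → V) ∪ Set.range y)) := by
              refine Submodule.span_mono hsub ?_
              rw [hsp]; exact hw''
            have husp : u ∈ Submodule.span ℝ (Set.range (Fin.cons u q : Fin (j+1) → V) ∪
                  (Set.range (Fin.cons p₀ p : Fin (j+1) → V) ∪ Set.range y)) :=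
              Submodule.subset_span (Set.mem_union_left _ ⟨0, by simp⟩)
            have hp₀sp : p₀ ∈ Submodule.span ℝ (Set.range (Fin.cons u q : Fin (j+1) → V) ∪
                  (Set.range (Fin.cons p₀ p : Fin (j+1) → V) ∪ Set.range y)) :=
              Submodule.subset_span (Set.mem_union_right _ (Set.mem_union_left _ ⟨0, by simp⟩))
            have heq : w = (w - (s⁻¹ * B p₀ w) • u - (B u w) • p₀)
                + (s⁻¹ * B p₀ w) • u + (B u w) • p₀ := by abel
            rw [heq]
            exact Submodule.add_mem _ (Submodule.add_mem _ hmemsp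
              (Submodule.smul_mem _ _ husp)) (Submodule.smul_mem _ _ hp₀sp)
        · intro i l
          refine Fin.cases ?_ ?_ i
          · refine Fin.cases ?_ ?_ l
            · simpa using hq₀p₀
            · intro ll
              have h0 := ((hmem' _).mp (hpW' ll)).2.1
              simp [Fin.cons_zero, Fin.cons_succ, (Fin.succ_ne_zero ll).symm, h0]
          · intro ii
            refine Fin.cases ?_ ?_ l
            · have h0 := hflip p₀ δ' hp₀δ' (q ii) ((hmem' _).mp (hqW' ii)).2.2
              simp [Fin.cons_zero, Fin.cons_succ, Fin.succ_ne_zero ii, h0]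
            · intro ll
              have h0 := h6 ii ll
              simp [Fin.cons_succ, Fin.succ_inj, h0]
        · intro i l
          refine Fin.cases ?_ ?_ i
          · refine Fin.cases ?_ ?_ l
            · simpa using hq₀q₀
            · intro ll; simpa using ((hmem' _).mp (hqW' ll)).2.1
          · intro ii
            refine Fin.cases ?_ ?_ l
            · simpa using hflip u δ huδ (q ii) ((hmem' _).mp (hqW' ii)).2.1
            · intro ll; simpa using h7 ii ll
        · intro i l
          refine Fin.cases ?_ ?_ i
          · refine Fin.cases ?_ ?_ l
            · simpa using hp₀p₀
            · intro ll; simpa using ((hmem' _).mp (hpW' ll)).2.2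
          · intro ii
            refine Fin.cases ?_ ?_ l
            · simpa using hflip p₀ δ' hp₀δ' (p ii) ((hmem' _).mp (hpW' ii)).2.2
            · intro ll; simpa using h8 ii ll
        · intro i m
          refine Fin.cases ?_ ?_ i
          · simpa using ((hmem' _).mp (hyW' m)).2.1
          · intro ii; simpa using h9 ii m
        · intro i m
          refine Fin.cases ?_ ?_ i
          · simpa using ((hmem' _).mp (hyW' m)).2.2
          · intro ii; simpa using h10 ii m
        · intro i m
          refine Fin.cases ?_ ?_ i
          · simpa using hflip u δ huδ (y m) ((hmem' _).mp (hyW' m)).2.1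
          · intro ii; simpa using h12 ii m
        · intro i m
          refine Fin.cases ?_ ?_ i
          · simpa using hflip p₀ δ' hp₀δ' (y m) ((hmem' _).mp (hyW' m)).2.2
          · intro ii; simpa using h13 ii m

/-- Graded Gram–Schmidt / linear-algebraic core of the `ℤ₂ⁿ`-Darboux theorem:
a finite-dimensional real vector space graded by odd `ℤ₂ⁿ`-degrees with a
nondegenerate homogeneous bilinear form of even degree `γ` admits a homogeneous
basis `q, p, y` with the canonical pairings; the `y`'s occur only if `γ = 0`. -/
theorem graded_darboux_basis (n : ℕ) (V : Type*) [AddCommGroup V] [Module ℝ V]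
    [FiniteDimensional ℝ V]
    (𝒱 : (Fin n → ZMod 2) → Submodule ℝ V)
    (hInt : DirectSum.IsInternal 𝒱)
    (hodd : ∀ δ : Fin n → ZMod 2, 𝒱 δ ≠ ⊥ → sp δ δ = 1)
    (γ : Fin n → ZMod 2) (hγ : sp γ γ = 0)
    (B : V →ₗ[ℝ] V →ₗ[ℝ] ℝ)
    (hhom : ∀ (da db : Fin n → ZMod 2) (a b : V), a ∈ 𝒱 da → b ∈ 𝒱 db →
      da + db ≠ γ → B a b = 0)
    (hsym : ∀ (da db : Fin n → ZMod 2) (a b : V), a ∈ 𝒱 da → b ∈ 𝒱 db →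
      B a b = (-1 : ℝ) ^ (sp da γ).val * B b a)
    (hnd : ∀ v : V, (∀ w : V, B v w = 0) → v = 0) :
    ∃ (j k : ℕ) (q p : Fin j → V) (y : Fin k → V)
      (dq : Fin j → (Fin n → ZMod 2)) (dy : Fin k → (Fin n → ZMod 2))
      (ε : Fin k → ℝ),
      (∀ i, q i ∈ 𝒱 (dq i)) ∧
      (∀ i, p i ∈ 𝒱 (dq i + γ)) ∧
      (∀ m, y m ∈ 𝒱 (dy m)) ∧
      (∀ m, ε m = 1 ∨ ε m = -1) ∧
      LinearIndependent ℝ (Sum.elim q (Sum.elim p y)) ∧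
      Submodule.span ℝ (Set.range (Sum.elim q (Sum.elim p y))) = ⊤ ∧
      (∀ i l, B (q i) (p l) = if i = l then 1 else 0) ∧
      (∀ i l, B (q i) (q l) = 0) ∧
      (∀ i l, B (p i) (p l) = 0) ∧
      (∀ i m, B (q i) (y m) = 0) ∧
      (∀ i m, B (p i) (y m) = 0) ∧
      (∀ m m', B (y m) (y m') = if m = m' then ε m else 0) ∧
      (γ ≠ 0 → k = 0) := by
  obtain ⟨j, k, q, p, y, dq, dy, ε, h1, h2, h3, h4, hsp, h6, h7, h8, h9, h10, h11,
      h12, h13, h14⟩ :=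
    gdAux n V 𝒱 hInt γ B hhom hsym (Module.finrank ℝ (⊤ : Submodule ℝ V)) ⊤
      (fun _ _ _ => Submodule.mem_top)
      (fun v _ hv => hnd v fun w => hv w Submodule.mem_top) rfl
  have hspan : Submodule.span ℝ (Set.range (Sum.elim q (Sum.elim p y))) = ⊤ := by
    rw [Set.Sum.elim_range, Set.Sum.elim_range]
    exact hsp
  refine ⟨j, k, q, p, y, dq, dy, ε, h1, h2, h3, h4, ?_, hspan, h6, h7, h8, h9, h10, h11, h14⟩
  rw [Fintype.linearIndependent_iff]
  intro g hg
  have hA : ∀ i₀, g (Sum.inl i₀) = 0 := by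
    intro i₀
    have h0 := congrArg (fun x => B x (p i₀)) hg
    simp only [map_sum, map_zero, map_add, LinearMap.sum_apply, LinearMap.zero_apply,
      LinearMap.add_apply, map_smul,
      LinearMap.smul_apply, smul_eq_mul, Fintype.sum_sum_type, Sum.elim_inl, Sum.elim_inr,
      h6, h8, h13, mul_zero, mul_ite, mul_one, Finset.sum_const_zero, add_zero,
      Finset.sum_ite_eq, Finset.sum_ite_eq', Finset.mem_univ, if_true] at h0
    exact h0
  have hB : ∀ l₀, g (Sum.inr (Sum.inl l₀)) = 0 := by
    intro l₀
    have h0 := congrArg (B (q l₀)) hg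
    simp only [map_sum, map_zero, map_add, map_smul, smul_eq_mul, Fintype.sum_sum_type,
      Sum.elim_inl, Sum.elim_inr, h6, h7, h9, mul_zero, mul_ite, mul_one,
      Finset.sum_const_zero, zero_add, add_zero,
      Finset.sum_ite_eq, Finset.sum_ite_eq', Finset.mem_univ, if_true] at h0
    exact h0
  have hC : ∀ m₀, g (Sum.inr (Sum.inr m₀)) = 0 := by
    intro m₀
    have h0 := congrArg (B (y m₀)) hg
    simp only [map_sum, map_zero, map_add, map_smul, smul_eq_mul, Fintype.sum_sum_type,
      Sum.elim_inl, Sum.elim_inr, h11, h12, h13, mul_zero, mul_ite,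
      Finset.sum_const_zero, zero_add, add_zero,
      Finset.sum_ite_eq, Finset.sum_ite_eq', Finset.mem_univ, if_true] at h0
    rcases h4 m₀ with h | h <;> rw [h] at h0 <;> simpa using h0
  rintro (i | l | m)
  · exact hA i
  · exact hB l
  · exact hC m
end
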